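/- (Commutation Lemma) If x is a strong reduct of u·v·w, then there exists a strong reduct y of v such that u·y·w strongly reduces to x. -/

import Mathlib

structure Letter (N : ℕ) where
  lo : ℕ
  hi : ℕ
  lo_le_hi : lo ≤ hi
  hi_le : hi ≤ N

namespace PS

/-- `t` is a (non-strict) subletter of `s`. -/
def Sub {N : ℕ} (t s : Letter N) : Prop := s.lo ≤ t.lo ∧ t.hi ≤ s.hi

/-- `t` is a proper subletter of `s`. -/
def PSub {N : ℕ} (t s : Letter N) : Prop := Sub t s ∧ t ≠ s

/-- Two letters commute iff they have distance at least 2. -/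
def Comm {N : ℕ} (s t : Letter N) : Prop := s.hi + 2 ≤ t.lo ∨ t.hi + 2 ≤ s.lo

abbrev Word (N : ℕ) := List (Letter N)

/-- Commutation step: swap two adjacent commuting letters. -/
def SwapStep {N : ℕ} (u v : Word N) : Prop :=
  ∃ (x y : Word N) (s t : Letter N),
    Comm s t ∧ u = x ++ s :: t :: y ∧ v = x ++ t :: s :: y

/-- Cancellation step: replace an occurrence `s·t` or `t·s` by `s`, when `t ⊆ s`. -/
def CancelStep {N : ℕ} (u v : Word N) : Prop :=
  ∃ (x y : Word N) (s t : Letter N),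
    Sub t s ∧ (u = x ++ s :: t :: y ∨ u = x ++ t :: s :: y) ∧ v = x ++ s :: y

/-- Splitting step: replace an occurrence `s·s` by a (possibly empty) product of
proper subletters of `s`. -/
def SplitStep {N : ℕ} (u v : Word N) : Prop :=
  ∃ (x y : Word N) (s : Letter N) (l : Word N),
    (∀ t ∈ l, PSub t s) ∧ u = x ++ s :: s :: y ∧ v = x ++ l ++ y

/-- Commutation-equivalence of words. -/
def WEquiv {N : ℕ} : Word N → Word N → Prop := Relation.ReflTransGen SwapStep

/-- Reduction: finitely many commutation and cancellation steps. -/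
def Red {N : ℕ} : Word N → Word N → Prop :=
  Relation.ReflTransGen (fun u v => SwapStep u v ∨ CancelStep u v)

/-- Strong reduction: also allowing splitting steps. -/
def SRed {N : ℕ} : Word N → Word N → Prop :=
  Relation.ReflTransGen (fun u v => SwapStep u v ∨ CancelStep u v ∨ SplitStep u v)

/-- The congruence defining the monoid Γ. -/
def GammaRel {N : ℕ} : Word N → Word N → Prop :=
  Relation.EqvGen (fun u v => SwapStep u v ∨ CancelStep u v)

/-- A word is reduced if there is no pair of occurrences `i ≠ j` with `sᵢ ⊆ sⱼ`
such that `sᵢ` commutes with every letter strictly between them. -/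
def Reduced {N : ℕ} (w : Word N) : Prop :=
  ¬ ∃ (x y z : Word N) (a b : Letter N),
      w = x ++ a :: (y ++ b :: z) ∧
      ((Sub a b ∧ ∀ r ∈ y, Comm a r) ∨ (Sub b a ∧ ∀ r ∈ y, Comm b r))

/-- The letter `s` is left-absorbed by the word `v`. -/
def LAbsLetter {N : ℕ} (s : Letter N) (v : Word N) : Prop :=
  ∃ (x : Word N) (t : Letter N) (y : Word N),
    v = x ++ t :: y ∧ Sub s t ∧ ∀ r ∈ x, Comm s r

/-- The letter `s` is properly left-absorbed by the word `v`. -/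
def PLAbsLetter {N : ℕ} (s : Letter N) (v : Word N) : Prop :=
  ∃ (x : Word N) (t : Letter N) (y : Word N),
    v = x ++ t :: y ∧ PSub s t ∧ ∀ r ∈ x, Comm s r

/-- The letter `s` is right-absorbed by the word `w`. -/
def RAbsLetter {N : ℕ} (s : Letter N) (w : Word N) : Prop :=
  ∃ (x : Word N) (t : Letter N) (y : Word N),
    w = x ++ t :: y ∧ Sub s t ∧ ∀ r ∈ y, Comm s r

/-- The letter `s` is properly right-absorbed by the word `w`. -/
def PRAbsLetter {N : ℕ} (s : Letter N) (w : Word N) : Prop :=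
  ∃ (x : Word N) (t : Letter N) (y : Word N),
    w = x ++ t :: y ∧ PSub s t ∧ ∀ r ∈ y, Comm s r

/-- The word `u` is left-absorbed by `v`. -/
def LAbsWord {N : ℕ} (u v : Word N) : Prop := ∀ s ∈ u, LAbsLetter s v

/-- `v` bites `u` from the right: `v` left-absorbs some letter of the final segment of `u`. -/
def BitesRight {N : ℕ} (v u : Word N) : Prop :=
  ∃ (x : Word N) (s : Letter N) (y : Word N),
    u = x ++ s :: y ∧ (∀ r ∈ y, Comm s r) ∧ LAbsLetter s v

end PS

/-!
A strong reduction step permutes letters, deletes one, or replaces a pair `s·s` by letters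
properly contained in `s`; so it weakly decreases the multiset of letter sizes in the
Dershowitz–Manna order, and we induct on `v` along that order. If `v` is not reduced, it has a
letter `t` commuting with every letter between it and a letter `b ⊇ t`. Shrinking `v` there keeps
`x` reachable from `u·v·w`: when `t ⊊ b`, the letter `t` may simply be deleted; when `t = b`,
the pair `t·Q·t` may be replaced by `Q·m`, where `m` is `t` or a word of proper subletters of `t`.
Both facts are proved by following the reduction to `x` step by step: a step away from `t` and `b`
is replayed, a step that moves, absorbs or splits one of them is matched by hand, and if the pair
survives to the end it contradicts the reducedness of `x`. When a split creates new letters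
absorbed by `b`, these are deleted in turn, in words whose size multiset is smaller — this is why
the induction runs along sizes and not along the length of the reduction.
-/

theorem Letter.ext {N : ℕ} {s t : Letter N} (hlo : s.lo = t.lo) (hhi : s.hi = t.hi) : s = t := by
  cases s; cases t; simp_all

def Letter.size {N : ℕ} (s : Letter N) : ℕ := s.hi - s.lo

theorem List.prop_of_erase_heads {α : Type*} {P : List α → Prop} {l W : List α}
    (h : ∀ d ∈ l, ∀ V, P (d :: V) → P V) (hP : P (l ++ W)) : P W := by
  induction l with
  | nil => simpa using hP
  | cons d l ih => exact ih (fun d' hd' => h d' (.tail _ hd')) (h d (.head _) _ hP)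

theorem List.prop_of_erase_lasts {α : Type*} {P : List α → Prop} {l W : List α}
    (h : ∀ d ∈ l, ∀ V, P (V ++ [d]) → P V) (hP : P (W ++ l)) : P W := by
  induction l using List.reverseRecOn with
  | nil => simpa using hP
  | append_singleton l d ih =>
    exact ih (fun d' hd' => h d' (by simp [hd'])) (h d (by simp) _ (by simpa using hP))

namespace PS

variable {N : ℕ}

section Letters

variable {a b c t : Letter N}

theorem Sub.refl (a : Letter N) : Sub a a := ⟨le_rfl, le_rfl⟩

theorem Sub.trans (hab : Sub a b) (hbc : Sub b c) : Sub a c :=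
  ⟨hbc.1.trans hab.1, hab.2.trans hbc.2⟩

theorem Sub.antisymm (hab : Sub a b) (hba : Sub b a) : a = b :=
  Letter.ext (le_antisymm hba.1 hab.1) (le_antisymm hab.2 hba.2)

theorem PSub.trans_sub (hab : PSub a b) (hbc : Sub b c) : PSub a c :=
  ⟨hab.1.trans hbc, by rintro rfl; exact hab.2 (hab.1.antisymm hbc)⟩

theorem PSub.size_lt (h : PSub a b) : a.size < b.size := by
  obtain ⟨⟨hlo, hhi⟩, hne⟩ := h
  have := a.lo_le_hi
  unfold Letter.size
  by_contra hle
  exact hne (Letter.ext (by omega) (by omega))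

theorem Comm.symm (h : Comm a b) : Comm b a := Or.symm h

theorem Comm.of_sub_left (h : Comm b c) (hab : Sub a b) : Comm a c := by
  obtain ⟨hlo, hhi⟩ := hab
  rcases h with h | h
  · exact Or.inl (by omega)
  · exact Or.inr (by omega)

theorem Comm.of_sub_right (h : Comm a b) (hcb : Sub c b) : Comm a c :=
  (h.symm.of_sub_left hcb).symm

theorem Sub.not_comm (h : Sub a b) : ¬ Comm a b := by
  have := a.lo_le_hi
  obtain ⟨hlo, hhi⟩ := h
  rintro (h | h) <;> omega

theorem Comm.irrefl (a : Letter N) : ¬ Comm a a := (Sub.refl a).not_comm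

end Letters

def Rule (p q : Letter N) (R : Word N) : Prop :=
  (Comm p q ∧ R = [q, p]) ∨ (Sub q p ∧ R = [p]) ∨ (Sub p q ∧ R = [q]) ∨
    (p = q ∧ ∀ c ∈ R, PSub c p)

def Step (u v : Word N) : Prop :=
  ∃ (X Y : Word N) (p q : Letter N) (R : Word N),
    Rule p q R ∧ u = X ++ p :: q :: Y ∧ v = X ++ R ++ Y

section Steps

variable {u v w : Word N} {p q : Letter N} {R : Word N}

theorem Rule.step (h : Rule p q R) : Step [p, q] R := ⟨[], [], p, q, R, h, rfl, by simp⟩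

theorem Step.swap (h : Comm p q) : Step [p, q] [q, p] := Rule.step (.inl ⟨h, rfl⟩)

theorem Step.cancel_right (h : Sub q p) : Step [p, q] [p] := Rule.step (.inr (.inl ⟨h, rfl⟩))

theorem Step.cancel_left (h : Sub p q) : Step [p, q] [q] := Rule.step (.inr (.inr (.inl ⟨h, rfl⟩)))

theorem Step.split (h : ∀ c ∈ R, PSub c p) : Step [p, p] R :=
  Rule.step (.inr (.inr (.inr ⟨rfl, h⟩)))

theorem Step.append_left (h : Step u v) (X : Word N) : Step (X ++ u) (X ++ v) := by
  obtain ⟨A, B, p, q, R, hR, rfl, rfl⟩ := h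
  exact ⟨X ++ A, B, p, q, R, hR, by simp, by simp⟩

theorem Step.append_right (h : Step u v) (Y : Word N) : Step (u ++ Y) (v ++ Y) := by
  obtain ⟨A, B, p, q, R, hR, rfl, rfl⟩ := h
  exact ⟨A, B ++ Y, p, q, R, hR, by simp, by simp⟩

theorem sRed_iff_reflTransGen_step : SRed u v ↔ Relation.ReflTransGen Step u v := by
  have : (fun u v : Word N => SwapStep u v ∨ CancelStep u v ∨ SplitStep u v) = Step := by
    ext u v
    constructor
    · rintro (⟨X, Y, s, t, h, rfl, rfl⟩ | ⟨X, Y, s, t, h, rfl | rfl, rfl⟩ |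
        ⟨X, Y, s, l, h, rfl, rfl⟩)
      · simpa using ((Step.swap h).append_left X).append_right Y
      · simpa using ((Step.cancel_right h).append_left X).append_right Y
      · simpa using ((Step.cancel_left h).append_left X).append_right Y
      · simpa using ((Step.split h).append_left X).append_right Y
    · rintro ⟨X, Y, p, q, R, ⟨h, rfl⟩ | ⟨h, rfl⟩ | ⟨h, rfl⟩ | ⟨rfl, h⟩, rfl, rfl⟩
      · exact .inl ⟨X, Y, p, q, h, rfl, by simp⟩
      · exact .inr (.inl ⟨X, Y, p, q, h, .inl rfl, by simp⟩)
      · exact .inr (.inl ⟨X, Y, q, p, h, .inr rfl, by simp⟩)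
      · exact .inr (.inr ⟨X, Y, p, R, h, rfl, rfl⟩)
  rw [SRed, this]

theorem SRed.refl (u : Word N) : SRed u u := Relation.ReflTransGen.refl

theorem SRed.trans (huv : SRed u v) (hvw : SRed v w) : SRed u w :=
  Relation.ReflTransGen.trans huv hvw

theorem Step.sRed (h : Step u v) : SRed u v :=
  sRed_iff_reflTransGen_step.2 (.single h)

theorem SRed.append_left (h : SRed u v) (X : Word N) : SRed (X ++ u) (X ++ v) := by
  rw [sRed_iff_reflTransGen_step] at h ⊢
  exact h.lift _ fun _ _ hs => hs.append_left X

theorem SRed.append_right (h : SRed u v) (Y : Word N) : SRed (u ++ Y) (v ++ Y) := by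
  rw [sRed_iff_reflTransGen_step] at h ⊢
  exact h.lift _ fun _ _ hs => hs.append_right Y

theorem Step.sRed_context (h : Step u v) (X Y : Word N) :
    SRed (X ++ u ++ Y) (X ++ v ++ Y) :=
  ((h.append_left X).append_right Y).sRed

theorem Rule.reverse (h : Rule p q R) : Rule q p R.reverse := by
  rcases h with ⟨h, rfl⟩ | ⟨h, rfl⟩ | ⟨h, rfl⟩ | ⟨rfl, h⟩
  · exact .inl ⟨h.symm, rfl⟩
  · exact .inr (.inr (.inl ⟨h, rfl⟩))
  · exact .inr (.inl ⟨h, rfl⟩)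
  · exact .inr (.inr (.inr ⟨rfl, fun c hc => h c (List.mem_reverse.1 hc)⟩))

theorem Step.reverse (h : Step u v) : Step u.reverse v.reverse := by
  obtain ⟨X, Y, p, q, R, hR, rfl, rfl⟩ := h
  exact ⟨Y.reverse, X.reverse, q, p, R.reverse, hR.reverse, by simp, by simp⟩

theorem SRed.reverse (h : SRed u v) : SRed u.reverse v.reverse := by
  rw [sRed_iff_reflTransGen_step] at h ⊢
  exact h.lift _ fun _ _ hs => hs.reverse

theorem Reduced.reverse (h : Reduced u) : Reduced u.reverse := by
  rintro ⟨X, Y, Z, a, b, hu, hab⟩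
  refine h ⟨Z.reverse, Y.reverse, X.reverse, b, a, by simpa using congrArg List.reverse hu, ?_⟩
  simpa only [List.mem_reverse] using hab.symm

end Steps

section Measure

def sizes (w : Word N) : Multiset ℕ := (w.map Letter.size : List ℕ)

def SizeLT (u v : Word N) : Prop := Multiset.IsDershowitzMannaLT (sizes u) (sizes v)

variable {u v w X Y R Z : Word N} {s t : Letter N}

@[simp] theorem sizes_append (u v : Word N) : sizes (u ++ v) = sizes u + sizes v := by
  simp [sizes]

theorem sizes_eq_of_perm (h : u.Perm v) : sizes u = sizes v :=
  Multiset.coe_eq_coe.2 (h.map _)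

theorem SizeLT.trans (huv : SizeLT u v) (hvw : SizeLT v w) : SizeLT u w :=
  Multiset.IsDershowitzMannaLT.trans huv hvw

theorem sizeLT_wellFounded : WellFounded (SizeLT (N := N)) :=
  InvImage.wf sizes Multiset.wellFounded_isDershowitzMannaLT

theorem sizeLT_of_replace (hZ : Z ≠ []) (h : ∀ c ∈ R, ∃ z ∈ Z, c.size < z.size) :
    SizeLT (X ++ R ++ Y) (X ++ Z ++ Y) := by
  refine ⟨sizes (X ++ Y), sizes R, sizes Z, by simpa [sizes] using hZ, ?_, ?_, ?_⟩
  · simp only [sizes_append]; abel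
  · simp only [sizes_append]; abel
  · simpa [sizes] using h

theorem sizeLT_erase (X Y : Word N) (t : Letter N) : SizeLT (X ++ Y) (X ++ t :: Y) := by
  simpa using sizeLT_of_replace (X := X) (Y := Y) (R := []) (Z := [t]) (by simp) (by simp)

theorem sizeLT_split (hR : ∀ c ∈ R, PSub c s) (X Y : Word N) :
    SizeLT (X ++ R ++ Y) (X ++ s :: s :: Y) := by
  simpa using sizeLT_of_replace (X := X) (Y := Y) (Z := [s, s]) (by simp)
    fun c hc => ⟨s, by simp, (hR c hc).size_lt⟩

theorem Step.sizes_eq_or_sizeLT (h : Step u v) : sizes v = sizes u ∨ SizeLT v u := by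
  obtain ⟨X, Y, p, q, R, ⟨-, rfl⟩ | ⟨-, rfl⟩ | ⟨-, rfl⟩ | ⟨rfl, hR⟩, rfl, rfl⟩ := h
  · exact .inl (sizes_eq_of_perm (by simpa using (List.Perm.swap p q Y).append_left X))
  · exact .inr (by simpa using sizeLT_erase (X ++ [p]) Y q)
  · exact .inr (by simpa using sizeLT_erase X (q :: Y) p)
  · exact .inr (sizeLT_split hR X Y)

end Measure

section Moves

variable {Q : Word N} {c t b : Letter N}

theorem sRed_move_right (hQ : ∀ r ∈ Q, Comm c r) (X Y : Word N) :
    SRed (X ++ c :: (Q ++ Y)) (X ++ (Q ++ c :: Y)) := by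
  induction Q generalizing X with
  | nil => exact .refl _
  | cons q Q ih =>
    have hswap := (Step.swap (hQ q (by simp))).sRed_context X (Q ++ Y)
    simpa using hswap.trans (by simpa using ih (fun r hr => hQ r (by simp [hr])) (X ++ [q]))

theorem sRed_move_left (hQ : ∀ r ∈ Q, Comm c r) (X Y : Word N) :
    SRed (X ++ (Q ++ c :: Y)) (X ++ c :: (Q ++ Y)) := by
  induction Q generalizing X with
  | nil => exact .refl _
  | cons q Q ih =>
    have hswap := (Step.swap (hQ q (by simp)).symm).sRed_context X (Q ++ Y)
    simpa using (ih (fun r hr => hQ r (by simp [hr])) (X ++ [q])).trans (by simpa using hswap)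

theorem sRed_erase_left (htb : Sub t b) (hQ : ∀ r ∈ Q, Comm t r) (X Y : Word N) :
    SRed (X ++ t :: (Q ++ b :: Y)) (X ++ (Q ++ b :: Y)) := by
  simpa using (sRed_move_right hQ X (b :: Y)).trans
    (by simpa using (Step.cancel_left htb).sRed_context (X ++ Q) Y)

theorem sRed_erase_right (htb : Sub t b) (hQ : ∀ r ∈ Q, Comm t r) (X Y : Word N) :
    SRed (X ++ b :: (Q ++ t :: Y)) (X ++ b :: (Q ++ Y)) := by
  simpa using (sRed_move_left hQ (X ++ [b]) Y).trans
    (by simpa using (Step.cancel_right htb).sRed_context X (Q ++ Y))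

end Moves

section Decomposition

variable {A Q B c : Word N} {t b : Letter N}

theorem Step.forall_comm (h : Step Q c) (hQ : ∀ r ∈ Q, Comm t r) : ∀ r ∈ c, Comm t r := by
  obtain ⟨X, Y, p, q, R, hR, rfl, rfl⟩ := h
  have hp : Comm t p := hQ p (by simp)
  have hq : Comm t q := hQ q (by simp)
  have hR' : ∀ r ∈ R, Comm t r := by
    rcases hR with ⟨-, rfl⟩ | ⟨-, rfl⟩ | ⟨-, rfl⟩ | ⟨rfl, hR⟩
    · simp [hp, hq]
    · simpa using hp
    · simpa using hq
    · exact fun r hr => hp.of_sub_right (hR r hr).1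
  simp only [List.mem_append, List.mem_cons] at hQ ⊢
  rintro r ((hr | hr) | hr)
  · exact hQ r (.inl hr)
  · exact hR' r hr
  · exact hQ r (.inr (.inr (.inr hr)))

theorem not_step_singleton (a : Letter N) : ¬ Step [a] c := by
  rintro ⟨X, Y, p, q, R, -, h, -⟩
  have := congrArg List.length h
  simp at this
  omega

theorem Step.append_cases {α β : Word N} (h : Step (α ++ β) c) :
    (∃ α', Step α α' ∧ c = α' ++ β) ∨
    (∃ α₀ β₀ p q R, α = α₀ ++ [p] ∧ β = q :: β₀ ∧ Rule p q R ∧ c = α₀ ++ R ++ β₀) ∨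
    (∃ β', Step β β' ∧ c = α ++ β') := by
  obtain ⟨X, Y, p, q, R, hR, he, rfl⟩ := h
  rcases List.append_eq_append_iff.1 he with ⟨γ, rfl, hβ⟩ | ⟨γ, rfl, hγ⟩
  · exact .inr (.inr ⟨γ ++ R ++ Y, ⟨γ, Y, p, q, R, hR, hβ, rfl⟩, by simp⟩)
  · match γ, hγ with
    | [], hγ => exact .inr (.inr ⟨R ++ Y, ⟨[], Y, p, q, R, hR, by simpa using hγ.symm, rfl⟩,
        by simp⟩)
    | [_], hγ =>
      simp only [List.cons_append, List.nil_append, List.cons.injEq] at hγ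
      obtain ⟨rfl, hβ⟩ := hγ
      exact .inr (.inl ⟨X, Y, p, q, R, rfl, hβ.symm, hR, by simp⟩)
    | _ :: _ :: γ, hγ =>
      simp only [List.cons_append, List.cons.injEq] at hγ
      obtain ⟨rfl, rfl, rfl⟩ := hγ
      exact .inl ⟨X ++ R ++ γ, ⟨X, γ, p, q, R, hR, by simp, rfl⟩, by simp⟩

theorem Step.cons_cases {a : Letter N} {β : Word N} (h : Step (a :: β) c) :
    (∃ q β₀ R, β = q :: β₀ ∧ Rule a q R ∧ c = R ++ β₀) ∨ (∃ β', Step β β' ∧ c = a :: β') := by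
  rcases Step.append_cases (α := [a]) h with ⟨α', hα, -⟩ | ⟨α₀, β₀, p, q, R, hα, hβ, hR, rfl⟩ |
    ⟨β', hβ, rfl⟩
  · exact absurd hα (not_step_singleton a)
  · obtain ⟨rfl, rfl⟩ : α₀ = [] ∧ p = a := by
      cases α₀ with
      | nil => simpa using hα.symm
      | cons _ _ => simp at hα
    exact .inl ⟨q, β₀, R, hβ, hR, by simp⟩
  · exact .inr ⟨β', hβ, rfl⟩

theorem Step.pattern_cases (h : Step (A ++ t :: (Q ++ b :: B)) c) :
    (∃ A', Step A A' ∧ c = A' ++ t :: (Q ++ b :: B)) ∨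
    (∃ A₀ p R, A = A₀ ++ [p] ∧ Rule p t R ∧ c = A₀ ++ R ++ (Q ++ b :: B)) ∨
    (∃ q Q₀ R, Q = q :: Q₀ ∧ Rule t q R ∧ c = A ++ R ++ (Q₀ ++ b :: B)) ∨
    (Q = [] ∧ ∃ R, Rule t b R ∧ c = A ++ R ++ B) ∨
    (∃ Q', Step Q Q' ∧ c = A ++ t :: (Q' ++ b :: B)) ∨
    (∃ Q₀ p R, Q = Q₀ ++ [p] ∧ Rule p b R ∧ c = A ++ t :: (Q₀ ++ R ++ B)) ∨
    (∃ q B₀ R, B = q :: B₀ ∧ Rule b q R ∧ c = A ++ t :: (Q ++ R ++ B₀)) ∨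
    (∃ B', Step B B' ∧ c = A ++ t :: (Q ++ b :: B')) := by
  rcases h.append_cases with ⟨A', hA, rfl⟩ | ⟨A₀, β₀, p, q, R, rfl, hβ, hR, rfl⟩ | ⟨β, hβ, rfl⟩
  · exact .inl ⟨A', hA, rfl⟩
  · obtain ⟨rfl, rfl⟩ := List.cons.inj hβ
    exact .inr (.inl ⟨A₀, p, R, rfl, hR, rfl⟩)
  rcases hβ.cons_cases with ⟨q, β₀, R, hQ, hR, rfl⟩ | ⟨γ, hγ, rfl⟩
  · cases Q with
    | nil =>
      obtain ⟨rfl, rfl⟩ := List.cons.inj hQ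
      exact .inr (.inr (.inr (.inl ⟨rfl, R, hR, by simp⟩)))
    | cons q' Q₀ =>
      obtain ⟨rfl, rfl⟩ := List.cons.inj hQ
      exact .inr (.inr (.inl ⟨q', Q₀, R, rfl, hR, by simp⟩))
  rcases hγ.append_cases with ⟨Q', hQ, rfl⟩ | ⟨Q₀, β₀, p, q, R, rfl, hb, hR, rfl⟩ | ⟨δ, hδ, rfl⟩
  · exact .inr (.inr (.inr (.inr (.inl ⟨Q', hQ, by simp⟩))))
  · obtain ⟨rfl, rfl⟩ := List.cons.inj hb
    exact .inr (.inr (.inr (.inr (.inr (.inl ⟨Q₀, p, R, rfl, hR, by simp⟩)))))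
  rcases hδ.cons_cases with ⟨q, B₀, R, rfl, hR, rfl⟩ | ⟨B', hB, rfl⟩
  · exact .inr (.inr (.inr (.inr (.inr (.inr (.inl ⟨q, B₀, R, rfl, hR, by simp⟩))))))
  · exact .inr (.inr (.inr (.inr (.inr (.inr (.inr ⟨B', hB, by simp⟩))))))

end Decomposition

theorem SRed.induction_on_sizes {x : Word N} {P : Word N → Prop} (base : P x)
    (step : ∀ T c, Step T c → SRed c x → P c → (∀ T', SizeLT T' T → SRed T' x → P T') → P T)
    {T : Word N} (h : SRed T x) : P T := by
  induction T using sizeLT_wellFounded.induction with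
  | _ T ih =>
  suffices ∀ T', sizes T' = sizes T → SRed T' x → P T' from this T rfl h
  intro T' hT' h'
  have hlt : ∀ T'', SizeLT T'' T' → SRed T'' x → P T'' := fun T'' hlt =>
    ih T'' (by unfold SizeLT at hlt ⊢; rwa [← hT'])
  rw [sRed_iff_reflTransGen_step] at h'
  induction h' using Relation.ReflTransGen.head_induction_on with
  | refl => exact base
  | head hstep hrest ihrest =>
    rw [← sRed_iff_reflTransGen_step] at hrest
    refine step _ _ hstep hrest ?_ hlt
    rcases hstep.sizes_eq_or_sizeLT with heq | hlt'
    · exact ihrest (heq.trans hT') fun T'' h'' => hlt T'' (by unfold SizeLT at h'' ⊢; rwa [← heq])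
    · exact hlt _ hlt' hrest

def ErasesAbsorbed (x T : Word N) : Prop :=
  ∀ ⦃A Q B : Word N⦄ ⦃t b : Letter N⦄, T = A ++ t :: (Q ++ b :: B) → PSub t b →
    (∀ r ∈ Q, Comm t r) → SRed (A ++ (Q ++ b :: B)) x

section ErasesAbsorbed

variable {x A Q B R : Word N} {p q t b : Letter N}

theorem Reduced.erasesAbsorbed (hx : Reduced x) : ErasesAbsorbed x x :=
  fun A Q B t b hT htb hQ => (hx ⟨A, Q, B, t, b, hT, .inl ⟨htb.1, hQ⟩⟩).elim

theorem erase_of_step_before_erased (hR : Rule p t R) (htb : PSub t b)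
    (hQ : ∀ r ∈ Q, Comm t r) (hc : SRed (A ++ R ++ (Q ++ b :: B)) x)
    (ihc : ErasesAbsorbed x (A ++ R ++ (Q ++ b :: B)))
    (ih : ∀ T, SizeLT T (A ++ p :: t :: (Q ++ b :: B)) → SRed T x → ErasesAbsorbed x T) :
    SRed (A ++ p :: (Q ++ b :: B)) x := by
  rcases hR with ⟨hpt, rfl⟩ | ⟨-, rfl⟩ | ⟨hpt, rfl⟩ | ⟨rfl, hR⟩
  · simpa using ihc (A := A) (Q := p :: Q) (by simp) htb (by simpa [hpt.symm] using hQ)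
  · simpa using hc
  · exact (sRed_erase_left (hpt.trans htb.1) (fun r hr => (hQ r hr).of_sub_left hpt)
      A B).trans (ihc (by simp) htb hQ)
  · -- erase the letters of `R` one by one, in words smaller than the current one: `ih` applies
    have hA := List.prop_of_erase_lasts (P := fun V => SRed (V ++ (Q ++ b :: B)) x ∧
        SizeLT (V ++ (Q ++ b :: B)) (A ++ p :: p :: (Q ++ b :: B)))
      (fun d hd V hV => by
        simp only [List.append_assoc, List.singleton_append] at hV
        exact ⟨ih _ hV.2 hV.1 rfl ((hR d hd).trans_sub htb.1)
          (fun r hr => (hQ r hr).of_sub_left (hR d hd).1), (sizeLT_erase V _ d).trans hV.2⟩)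
      (l := R) ⟨by simpa using hc, by simpa using sizeLT_split hR A (Q ++ b :: B)⟩
    exact (sRed_erase_left htb.1 hQ A B).trans hA.1

theorem erase_of_step_before_absorber (hR : Rule p b R) (htb : PSub t b)
    (htp : Comm t p) (hQ : ∀ r ∈ Q, Comm t r) (ihc : ErasesAbsorbed x (A ++ t :: (Q ++ R ++ B))) :
    SRed (A ++ (Q ++ p :: b :: B)) x := by
  rcases hR with ⟨hpb, rfl⟩ | ⟨hbp, rfl⟩ | ⟨hpb, rfl⟩ | ⟨rfl, -⟩
  · simpa using ((Step.swap hpb).sRed_context (A ++ Q) B).trans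
      (by simpa using ihc (A := A) (Q := Q) (B := p :: B) (by simp) htb hQ)
  · simpa using ((Step.cancel_right hbp).sRed_context (A ++ Q) B).trans
      (by simpa using ihc (A := A) (Q := Q) (B := B) (by simp) (htb.trans_sub hbp) hQ)
  · simpa using ((Step.cancel_left hpb).sRed_context (A ++ Q) B).trans
      (by simpa using ihc (A := A) (Q := Q) (B := B) (by simp) htb hQ)
  · exact absurd htp htb.1.not_comm

theorem erase_of_step_after_absorber (hR : Rule b q R) (htb : PSub t b)
    (hQ : ∀ r ∈ Q, Comm t r) (hc : SRed (A ++ t :: (Q ++ R ++ B)) x)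
    (ihc : ErasesAbsorbed x (A ++ t :: (Q ++ R ++ B))) : SRed (A ++ (Q ++ b :: q :: B)) x := by
  rcases hR with ⟨hbq, rfl⟩ | ⟨hqb, rfl⟩ | ⟨hbq, rfl⟩ | ⟨rfl, hR⟩
  · have hQq : ∀ r ∈ Q ++ [q], Comm t r :=
      List.forall_mem_append.2 ⟨hQ, List.forall_mem_singleton.2 (hbq.of_sub_left htb.1)⟩
    simpa using ((Step.swap hbq).sRed_context (A ++ Q) B).trans
      (by simpa using ihc (A := A) (Q := Q ++ [q]) (B := B) (by simp) htb hQq)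
  · simpa using ((Step.cancel_right hqb).sRed_context (A ++ Q) B).trans
      (by simpa using ihc (A := A) (Q := Q) (B := B) (by simp) htb hQ)
  · simpa using ((Step.cancel_left hbq).sRed_context (A ++ Q) B).trans
      (by simpa using ihc (A := A) (Q := Q) (B := B) (by simp) (htb.trans_sub hbq) hQ)
  · -- split `b·b` into `t·R` instead, and move `t` back in front of `Q`
    have hsplit := (Step.split (List.forall_mem_cons.2 ⟨htb, hR⟩)).sRed_context (A ++ Q) B
    have hmove := (sRed_move_left hQ A (R ++ B)).trans (by simpa using hc)
    simpa using hsplit.trans (by simpa using hmove)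

theorem ErasesAbsorbed.of_step {T c : Word N} (hT : Step T c) (hc : SRed c x)
    (ihc : ErasesAbsorbed x c) (ih : ∀ T', SizeLT T' T → SRed T' x → ErasesAbsorbed x T') :
    ErasesAbsorbed x T := by
  rintro A Q B t b rfl htb hQ
  rcases hT.pattern_cases with ⟨A', hA, rfl⟩ | ⟨A₀, p, R, rfl, hR, rfl⟩ |
    ⟨q, Q₀, R, rfl, hR, rfl⟩ | ⟨rfl, R, hR, rfl⟩ | ⟨Q', hQ', rfl⟩ | ⟨Q₀, p, R, rfl, hR, rfl⟩ |
    ⟨q, B₀, R, rfl, hR, rfl⟩ | ⟨B', hB, rfl⟩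
  · exact (hA.append_right _).sRed.trans (ihc rfl htb hQ)
  · simpa using erase_of_step_before_erased hR htb hQ hc ihc (by simpa using ih)
  · have htq := hQ q (by simp)
    rcases hR with ⟨-, rfl⟩ | ⟨h, -⟩ | ⟨h, -⟩ | ⟨rfl, -⟩
    · simpa using ihc (A := A ++ [q]) (Q := Q₀) (by simp) htb (fun r hr => hQ r (by simp [hr]))
    · exact absurd htq.symm h.not_comm
    · exact absurd htq h.not_comm
    · exact absurd htq (Comm.irrefl _)
  · rcases hR with ⟨h, -⟩ | ⟨h, -⟩ | ⟨-, rfl⟩ | ⟨rfl, -⟩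
    · exact absurd h htb.1.not_comm
    · exact absurd (htb.1.antisymm h) htb.2
    · simpa using hc
    · exact absurd rfl htb.2
  · simpa using (hQ'.sRed_context A (b :: B)).trans
      (by simpa using ihc (A := A) (Q := Q') (by simp) htb (hQ'.forall_comm hQ))
  · simpa using erase_of_step_before_absorber hR htb (hQ p (by simp))
      (fun r hr => hQ r (by simp [hr])) (by simpa using ihc)
  · simpa using erase_of_step_after_absorber hR htb hQ hc ihc
  · simpa using (hB.sRed_context (A ++ Q ++ [b]) []).trans
      (by simpa using ihc (A := A) (Q := Q) (B := B') (by simp) htb hQ)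

theorem SRed.erase_absorbed_left (h : SRed (A ++ t :: (Q ++ b :: B)) x) (hx : Reduced x)
    (htb : PSub t b) (hQ : ∀ r ∈ Q, Comm t r) : SRed (A ++ (Q ++ b :: B)) x :=
  SRed.induction_on_sizes (P := ErasesAbsorbed x) hx.erasesAbsorbed
    (fun _ _ hT hc ihc ih => ihc.of_step hT hc ih) h rfl htb hQ

theorem SRed.erase_absorbed_right (h : SRed (A ++ b :: (Q ++ t :: B)) x) (hx : Reduced x)
    (htb : PSub t b) (hQ : ∀ r ∈ Q, Comm t r) : SRed (A ++ b :: (Q ++ B)) x := by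
  have h' : SRed (B.reverse ++ t :: (Q.reverse ++ b :: A.reverse)) x.reverse := by
    simpa using h.reverse
  simpa using (h'.erase_absorbed_left hx.reverse htb (by simpa using hQ)).reverse

end ErasesAbsorbed

def IsPairReduct (a : Letter N) (m : Word N) : Prop := m = [a] ∨ ∀ c ∈ m, PSub c a

section PairReduct

variable {x U Q W R m : Word N} {a p q : Letter N}

theorem IsPairReduct.step (hm : IsPairReduct a m) : Step [a, a] m := by
  rcases hm with rfl | hm
  · exact Step.cancel_right (Sub.refl a)
  · exact Step.split hm

theorem IsPairReduct.sub (hm : IsPairReduct a m) : ∀ c ∈ m, Sub c a := by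
  rcases hm with rfl | hm
  · simpa using Sub.refl a
  · exact fun c hc => (hm c hc).1

theorem IsPairReduct.sizeLT (hm : IsPairReduct a m) (X Y : Word N) :
    SizeLT (X ++ m ++ Y) (X ++ a :: a :: Y) := by
  rcases hm with rfl | hm
  · simpa using sizeLT_erase (X ++ [a]) Y a
  · exact sizeLT_split hm X Y

theorem IsPairReduct.absorb_left (hm : IsPairReduct a m) (hpa : PSub p a) :
    ∃ m', IsPairReduct a m' ∧ SRed (p :: m') m := by
  rcases hm with rfl | hm
  · exact ⟨[a], .inl rfl, (Step.cancel_left hpa.1).sRed⟩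
  · refine ⟨p :: m, .inr (List.forall_mem_cons.2 ⟨hpa, hm⟩), ?_⟩
    simpa using (Step.split (R := []) (p := p) (by simp)).sRed_context [] m

theorem IsPairReduct.absorb_right (hm : IsPairReduct a m) (hpa : PSub p a) :
    ∃ m', IsPairReduct a m' ∧ SRed (m' ++ [p]) m := by
  rcases hm with rfl | hm
  · exact ⟨[a], .inl rfl, (Step.cancel_right hpa.1).sRed⟩
  · refine ⟨m ++ [p], .inr (List.forall_mem_append.2 ⟨hm, by simpa using hpa⟩), ?_⟩
    simpa using (Step.split (R := []) (p := p) (by simp)).sRed_context m []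

def PairReducible (x T : Word N) : Prop :=
  ∀ ⦃U Q W : Word N⦄ ⦃a : Letter N⦄, T = U ++ a :: (Q ++ a :: W) → (∀ r ∈ Q, Comm a r) →
    ∃ m, IsPairReduct a m ∧ SRed (U ++ (Q ++ (m ++ W))) x

theorem Reduced.pairReducible (hx : Reduced x) : PairReducible x x :=
  fun U Q W a hT hQ => (hx ⟨U, Q, W, a, a, hT, .inl ⟨Sub.refl a, hQ⟩⟩).elim

theorem pairReduct_of_step_before_first (hx : Reduced x) (hR : Rule p a R)
    (hQ : ∀ r ∈ Q, Comm a r) (hc : SRed (U ++ R ++ (Q ++ a :: W)) x)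
    (ihc : PairReducible x (U ++ R ++ (Q ++ a :: W))) :
    ∃ m, IsPairReduct a m ∧ SRed (U ++ p :: (Q ++ (m ++ W))) x := by
  rcases hR with ⟨hpa, rfl⟩ | ⟨-, rfl⟩ | ⟨hpa, rfl⟩ | ⟨rfl, hR⟩
  · simpa using ihc (U := U) (Q := p :: Q) (by simp) (List.forall_mem_cons.2 ⟨hpa.symm, hQ⟩)
  · exact ⟨[a], .inl rfl, by simpa using hc⟩
  · by_cases hne : p = a
    · subst hne
      exact ⟨[p], .inl rfl, by simpa using hc⟩
    obtain ⟨m, hm, hmx⟩ := ihc (U := U) (Q := Q) (W := W) (by simp) hQ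
    obtain ⟨m', hm', hm'm⟩ := hm.absorb_left ⟨hpa, hne⟩
    have hmove := sRed_move_right (fun r hr => (hQ r hr).of_sub_left hpa) U (m' ++ W)
    have habsorb := ((hm'm.append_left (U ++ Q)).append_right W).trans (by simpa using hmx)
    exact ⟨m', hm', hmove.trans (by simpa using habsorb)⟩
  · -- erase the letters of `R`, each absorbed by the second `p` through `Q`
    have hU := List.prop_of_erase_lasts (P := fun V => SRed (V ++ (Q ++ p :: W)) x)
      (fun d hd V hV => by
        simpa using (show SRed (V ++ d :: (Q ++ p :: W)) x by simpa using hV).erase_absorbed_left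
          hx (hR d hd) fun r hr => (hQ r hr).of_sub_left (hR d hd).1)
      (l := R) (by simpa using hc)
    exact ⟨[p], .inl rfl, by simpa using (sRed_erase_left (Sub.refl p) hQ U W).trans hU⟩

theorem pairReduct_of_step_before_second (hR : Rule p a R) (hap : Comm a p)
    (hQ : ∀ r ∈ Q, Comm a r) (ihc : PairReducible x (U ++ a :: (Q ++ R ++ W))) :
    ∃ m, IsPairReduct a m ∧ SRed (U ++ (Q ++ p :: (m ++ W))) x := by
  rcases hR with ⟨-, rfl⟩ | ⟨h, -⟩ | ⟨h, -⟩ | ⟨rfl, -⟩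
  · obtain ⟨m, hm, hmx⟩ := ihc (U := U) (Q := Q) (W := p :: W) (by simp) hQ
    have hmove := sRed_move_right (fun r hr => hap.symm.of_sub_right (hm.sub r hr)) (U ++ Q) W
    exact ⟨m, hm, by simpa using hmove.trans (by simpa using hmx)⟩
  · exact absurd hap h.not_comm
  · exact absurd hap.symm h.not_comm
  · exact absurd hap (Comm.irrefl _)

theorem pairReduct_of_step_after_second (hx : Reduced x) (hR : Rule a q R)
    (hQ : ∀ r ∈ Q, Comm a r) (hc : SRed (U ++ a :: (Q ++ R ++ W)) x)
    (ihc : PairReducible x (U ++ a :: (Q ++ R ++ W))) :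
    ∃ m, IsPairReduct a m ∧ SRed (U ++ (Q ++ (m ++ q :: W))) x := by
  have hback : ∀ V, SRed (U ++ a :: (Q ++ V)) x → SRed (U ++ (Q ++ a :: V)) x :=
    fun V hV => (sRed_move_left hQ U V).trans hV
  rcases hR with ⟨haq, rfl⟩ | ⟨hqa, rfl⟩ | ⟨haq, rfl⟩ | ⟨rfl, hR⟩
  · obtain ⟨m, hm, hmx⟩ := ihc (U := U) (Q := Q ++ [q]) (W := W) (by simp)
      (List.forall_mem_append.2 ⟨hQ, List.forall_mem_singleton.2 haq⟩)
    have hmove := sRed_move_left (fun r hr => haq.symm.of_sub_right (hm.sub r hr)) (U ++ Q) W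
    exact ⟨m, hm, by simpa using hmove.trans (by simpa using hmx)⟩
  · by_cases hne : q = a
    · subst hne
      exact ⟨[q], .inl rfl, by simpa using hback (q :: W) (by simpa using hc)⟩
    obtain ⟨m, hm, hmx⟩ := ihc (U := U) (Q := Q) (W := W) (by simp) hQ
    obtain ⟨m', hm', hm'm⟩ := hm.absorb_right ⟨hqa, hne⟩
    have habsorb := ((hm'm.append_left (U ++ Q)).append_right W).trans (by simpa using hmx)
    exact ⟨m', hm', by simpa using habsorb⟩
  · exact ⟨[a], .inl rfl, by simpa using hback (q :: W) (by simpa using hc)⟩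
  · -- erase the letters of `R`, each absorbed by the first `a` through `Q`
    have hW := List.prop_of_erase_heads (P := fun V => SRed (U ++ a :: (Q ++ V)) x)
      (fun d hd V hV => hV.erase_absorbed_right hx (hR d hd)
        fun r hr => (hQ r hr).of_sub_left (hR d hd).1)
      (l := R) (by simpa using hc)
    have hcancel := (Step.cancel_right (Sub.refl a)).sRed_context (U ++ Q) W
    exact ⟨[a], .inl rfl, by simpa using hcancel.trans (by simpa using hback W hW)⟩

theorem PairReducible.of_step (hx : Reduced x) {T c : Word N} (hT : Step T c)
    (hc : SRed c x) (ihc : PairReducible x c) : PairReducible x T := by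
  rintro U Q W a rfl hQ
  rcases hT.pattern_cases with ⟨U', hU, rfl⟩ | ⟨U₀, p, R, rfl, hR, rfl⟩ |
    ⟨q, Q₀, R, rfl, hR, rfl⟩ | ⟨rfl, R, hR, rfl⟩ | ⟨Q', hQ', rfl⟩ | ⟨Q₀, p, R, rfl, hR, rfl⟩ |
    ⟨q, W₀, R, rfl, hR, rfl⟩ | ⟨W', hW, rfl⟩
  · obtain ⟨m, hm, hmx⟩ := ihc rfl hQ
    exact ⟨m, hm, (hU.append_right _).sRed.trans hmx⟩
  · simpa using pairReduct_of_step_before_first hx hR hQ hc ihc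
  · have haq := hQ q (by simp)
    rcases hR with ⟨-, rfl⟩ | ⟨h, -⟩ | ⟨h, -⟩ | ⟨rfl, -⟩
    · simpa using ihc (U := U ++ [q]) (Q := Q₀) (W := W) (by simp)
        (fun r hr => hQ r (by simp [hr]))
    · exact absurd haq.symm h.not_comm
    · exact absurd haq h.not_comm
    · exact absurd haq (Comm.irrefl _)
  · rcases hR with ⟨h, -⟩ | ⟨-, rfl⟩ | ⟨-, rfl⟩ | ⟨-, hR⟩
    · exact absurd h (Comm.irrefl _)
    · exact ⟨[a], .inl rfl, by simpa using hc⟩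
    · exact ⟨[a], .inl rfl, by simpa using hc⟩
    · exact ⟨R, .inr hR, by simpa using hc⟩
  · obtain ⟨m, hm, hmx⟩ := ihc (U := U) (Q := Q') (W := W) (by simp) (hQ'.forall_comm hQ)
    exact ⟨m, hm, by simpa using (hQ'.sRed_context U (m ++ W)).trans (by simpa using hmx)⟩
  · simpa using pairReduct_of_step_before_second hR (hQ p (by simp))
      (fun r hr => hQ r (by simp [hr])) ihc
  · simpa using pairReduct_of_step_after_second hx hR hQ hc ihc
  · obtain ⟨m, hm, hmx⟩ := ihc (U := U) (Q := Q) (W := W') (by simp) hQ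
    exact ⟨m, hm, by simpa using (hW.sRed_context (U ++ Q ++ m) []).trans (by simpa using hmx)⟩

theorem SRed.exists_pairReduct (h : SRed (U ++ a :: (Q ++ a :: W)) x) (hx : Reduced x)
    (hQ : ∀ r ∈ Q, Comm a r) : ∃ m, IsPairReduct a m ∧ SRed (U ++ (Q ++ (m ++ W))) x :=
  SRed.induction_on_sizes (P := PairReducible x) hx.pairReducible
    (fun _ _ hT hc ihc _ => ihc.of_step hx hT hc) h rfl hQ

end PairReduct

theorem exists_sizeLT_of_not_reduced {u v w x : Word N} (hv : ¬ Reduced v)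
    (h : SRed (u ++ v ++ w) x) (hx : Reduced x) :
    ∃ v', SRed v v' ∧ SizeLT v' v ∧ SRed (u ++ v' ++ w) x := by
  obtain ⟨p, B, r, α, β, rfl, hαβ⟩ := not_not.mp hv
  by_cases hne : α = β
  · subst hne
    have hB : ∀ c ∈ B, Comm α c := by rcases hαβ with ⟨-, hB⟩ | ⟨-, hB⟩ <;> exact hB
    obtain ⟨m, hm, hmx⟩ :=
      (show SRed ((u ++ p) ++ α :: (B ++ α :: (r ++ w))) x by simpa using h).exists_pairReduct hx hB
    have hperm : (p ++ α :: (B ++ α :: r)).Perm (p ++ B ++ α :: α :: r) := by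
      simpa using (List.perm_middle (l₁ := B) (a := α) (l₂ := α :: r)).symm.append_left p
    refine ⟨p ++ B ++ m ++ r, ?_, ?_, by simpa using hmx⟩
    · have hmove := sRed_move_right hB p (α :: r)
      simpa using hmove.trans (by simpa using hm.step.sRed_context (p ++ B) r)
    · simpa [SizeLT, sizes_eq_of_perm hperm] using hm.sizeLT (p ++ B) r
  rcases hαβ with ⟨hsub, hB⟩ | ⟨hsub, hB⟩
  · refine ⟨p ++ (B ++ β :: r), sRed_erase_left hsub hB p r, sizeLT_erase p _ α, ?_⟩
    have h' : SRed ((u ++ p) ++ α :: (B ++ β :: (r ++ w))) x := by simpa using h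
    simpa using h'.erase_absorbed_left hx ⟨hsub, hne⟩ hB
  · refine ⟨p ++ α :: (B ++ r), sRed_erase_right hsub hB p r, ?_, ?_⟩
    · simpa using sizeLT_erase (p ++ α :: B) r β
    have h' : SRed ((u ++ p) ++ α :: (B ++ β :: (r ++ w))) x := by simpa using h
    simpa using h'.erase_absorbed_right hx ⟨hsub, Ne.symm hne⟩ hB

end PS

open PS in
/-- Commutation Lemma: if `x` is a strong reduct of `u·v·w`, then there is a
strong reduct `y` of `v` with `u·y·w` strongly reducing to `x`. -/
theorem commutation_lemma {N : ℕ} (u v w x : Word N)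
    (h : SRed (u ++ v ++ w) x) (hx : Reduced x) :
    ∃ y : Word N, SRed v y ∧ Reduced y ∧ SRed (u ++ y ++ w) x := by
  induction v using sizeLT_wellFounded.induction with
  | _ v ih =>
  by_cases hv : Reduced v
  · exact ⟨v, .refl v, hv, h⟩
  obtain ⟨v', hvv', hlt, hv'x⟩ := exists_sizeLT_of_not_reduced hv h hx
  obtain ⟨y, hv'y, hy, hyx⟩ := ih v' hlt hv'x
  exact ⟨y, hvv'.trans hv'y, hy, hyx⟩
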